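/- arXiv:2106.01517 — 4 statements merged into one kernel-verified Lean document; each statement's English description precedes it below -/
import Mathlib

section
/- Let p be an odd prime and let X be a finitely generated torsion module over Λ = ℤ_p⟦T⟧ such that the quotient X/TX is finite. Then X itself is finite if and only if #(X/TX) = #(X[T]), i.e. the cardinality of the quotient by multiplication by T equals the cardinality of the kernel of multiplication by T. -/
/-- Multiplication by `T` on a module over the Iwasawa algebra `ℤ_p⟦T⟧`,
viewed as a `ℤ_p`-linear map. -/
noncomputable def Tmul (p : ℕ) [Fact p.Prime] (X : Type*) [AddCommGroup X]
    [Module (PowerSeries ℤ_[p]) X] [Module ℤ_[p] X]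
    [IsScalarTower ℤ_[p] (PowerSeries ℤ_[p]) X] : X →ₗ[ℤ_[p]] X :=
  (LinearMap.lsmul (PowerSeries ℤ_[p]) X PowerSeries.X).restrictScalars ℤ_[p]

/-! ### Auxiliary material

First, a proof of the Hilbert basis theorem for power series rings
(`R⟦X⟧` is Noetherian when `R` is), which is needed since `ℤ_p⟦T⟧` must be
Noetherian for the main argument. -/

open PowerSeries
namespace HB
variable {R : Type*} [CommRing R]

def lcIdeal (I : Ideal R⟦X⟧) (n : ℕ) : Ideal R where
  carrier := {c | ∃ f ∈ I, (∀ i < n, coeff i f = 0) ∧ coeff n f = c}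
  add_mem' := by
    rintro a b ⟨f, hf, hfo, rfl⟩ ⟨g, hg, hgo, rfl⟩
    exact ⟨f + g, I.add_mem hf hg, fun i hi => by simp [hfo i hi, hgo i hi], by simp⟩
  zero_mem' := ⟨0, I.zero_mem, by simp, by simp⟩
  smul_mem' := by
    rintro r c ⟨f, hf, hfo, rfl⟩
    exact ⟨C r * f, I.mul_mem_left _ hf,
      fun i hi => by simp [coeff_C_mul, hfo i hi], by simp [coeff_C_mul]⟩

lemma lcIdeal_mono (I : Ideal R⟦X⟧) : Monotone (lcIdeal I) := by
  refine monotone_nat_of_le_succ fun n c hc => ?_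
  obtain ⟨f, hf, hfo, rfl⟩ := hc
  refine ⟨X * f, I.mul_mem_left _ hf, fun i hi => ?_, coeff_succ_X_mul n f⟩
  cases i with
  | zero => simp
  | succ j => rw [coeff_succ_X_mul]; exact hfo j (by omega)

/-- A finite generating set of `lcIdeal I n` (Noetherian hypothesis). -/
noncomputable def Sgen [IsNoetherianRing R] (I : Ideal R⟦X⟧) (n : ℕ) : Finset R :=
  (IsNoetherian.noetherian (lcIdeal I n)).choose

lemma Sgen_spec [IsNoetherianRing R] (I : Ideal R⟦X⟧) (n : ℕ) :
    Ideal.span (↑(Sgen I n) : Set R) = lcIdeal I n :=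
  (IsNoetherian.noetherian (lcIdeal I n)).choose_spec

lemma Sgen_mem [IsNoetherianRing R] (I : Ideal R⟦X⟧) {n : ℕ} {c : R} (hc : c ∈ Sgen I n) :
    c ∈ lcIdeal I n := by
  rw [← Sgen_spec I n]; exact Ideal.subset_span hc

open Classical in
/-- A witness series for an element of `lcIdeal I n`. -/
noncomputable def wit (I : Ideal R⟦X⟧) (n : ℕ) (c : R) : R⟦X⟧ :=
  if h : c ∈ lcIdeal I n then h.choose else 0

lemma wit_spec (I : Ideal R⟦X⟧) {n : ℕ} {c : R} (h : c ∈ lcIdeal I n) :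
    wit I n c ∈ I ∧ (∀ i < n, coeff i (wit I n c) = 0) ∧ coeff n (wit I n c) = c := by
  rw [wit, dif_pos h]
  obtain ⟨h1, h2⟩ := h.choose_spec
  exact ⟨h1, h2.1, h2.2⟩

open Classical in
/-- Representation coefficients for elements in the span of a finset. -/
noncomputable def pick (s : Finset R) (c : R) : R → R :=
  if h : c ∈ Ideal.span (↑s : Set R) then (Submodule.mem_span_finset.mp h).choose else 0

lemma pick_spec {s : Finset R} {c : R} (h : c ∈ Ideal.span (↑s : Set R)) :
    ∑ i ∈ s, pick s c i * i = c := by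
  rw [pick, dif_pos h]
  simpa [smul_eq_mul] using (Submodule.mem_span_finset.mp h).choose_spec.2

end HB

namespace HB2
open HB
variable {R : Type*} [CommRing R] [IsNoetherianRing R]

noncomputable local instance instDecEqPS : DecidableEq R⟦X⟧ := Classical.decEq _

lemma mem_lcIdeal_of (I : Ideal R⟦X⟧) {n : ℕ} {f : R⟦X⟧} (hf : f ∈ I)
    (h : ∀ i < n, coeff i f = 0) : coeff n f ∈ lcIdeal I n :=
  ⟨f, hf, h, rfl⟩

lemma coeff_C_mul_X_pow_mul (a : R) (m i : ℕ) (w : R⟦X⟧) :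
    coeff i (C a * X ^ m * w) = if m ≤ i then a * coeff (i - m) w else 0 := by
  rw [mul_assoc, coeff_C_mul, mul_comm (X ^ m : R⟦X⟧) w, coeff_mul_X_pow']
  split <;> simp

noncomputable def seq2 (I : Ideal R⟦X⟧) (N : ℕ) (g : R⟦X⟧) : ℕ → R⟦X⟧
  | 0 => g
  | m + 1 => seq2 I N g m -
      ∑ c ∈ Sgen I N,
        C (pick (Sgen I N) (coeff (N + m) (seq2 I N g m)) c) * X ^ m * wit I N c

noncomputable def chi (I : Ideal R⟦X⟧) (N : ℕ) (g : R⟦X⟧) (j : ℕ) (c : R) : R :=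
  pick (Sgen I N) (coeff (N + j) (seq2 I N g j)) c

variable {I : Ideal R⟦X⟧} {N : ℕ} {g : R⟦X⟧}

lemma seq2_spec (hstab : ∀ m, N ≤ m → lcIdeal I N = lcIdeal I m)
    (hg : g ∈ I) (hgo : ∀ i < N, coeff i g = 0) :
    ∀ m, seq2 I N g m ∈ I ∧ ∀ i < N + m, coeff i (seq2 I N g m) = 0 := by
  intro m
  induction m with
  | zero => exact ⟨hg, fun i hi => hgo i (by omega)⟩
  | succ m ih =>
    obtain ⟨hs, hso⟩ := ih
    have hb : coeff (N + m) (seq2 I N g m) ∈ Ideal.span (↑(Sgen I N) : Set R) := by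
      rw [Sgen_spec, hstab (N + m) (Nat.le_add_right N m)]
      exact mem_lcIdeal_of I hs hso
    constructor
    · exact Ideal.sub_mem _ hs (Ideal.sum_mem _ fun c hc =>
        I.mul_mem_left _ (wit_spec I (Sgen_mem I hc)).1)
    · intro i hi
      rw [seq2, map_sub, map_sum]
      rcases (show i < N + m ∨ i = N + m by omega) with h | h
      · rw [hso i h, Finset.sum_eq_zero, sub_zero]
        intro c hc
        rw [coeff_C_mul_X_pow_mul]
        split
        · next hmi => rw [(wit_spec I (Sgen_mem I hc)).2.1 (i - m) (by omega), mul_zero]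
        · rfl
      · subst h
        rw [sub_eq_zero]
        calc coeff (N + m) (seq2 I N g m)
            = ∑ c ∈ Sgen I N, pick (Sgen I N) (coeff (N + m) (seq2 I N g m)) c * c :=
              (pick_spec hb).symm
          _ = ∑ c ∈ Sgen I N, coeff (N + m)
                (C (pick (Sgen I N) (coeff (N + m) (seq2 I N g m)) c) * X ^ m
                  * wit I N c) := by
              refine Finset.sum_congr rfl fun c hc => ?_
              rw [coeff_C_mul_X_pow_mul, if_pos (by omega), Nat.add_sub_cancel,
                (wit_spec I (Sgen_mem I hc)).2.2]

lemma seq2_eq : ∀ m, seq2 I N g m =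
    g - ∑ c ∈ Sgen I N, (∑ j ∈ Finset.range m, C (chi I N g j c) * X ^ j) * wit I N c := by
  intro m
  induction m with
  | zero => simp [seq2]
  | succ m ih =>
    rw [seq2]
    have hsplit : ∀ c, (∑ j ∈ Finset.range (m + 1), C (chi I N g j c) * X ^ j) * wit I N c
        = (∑ j ∈ Finset.range m, C (chi I N g j c) * X ^ j) * wit I N c
          + C (chi I N g m c) * X ^ m * wit I N c := fun c => by
      rw [Finset.sum_range_succ, add_mul]
    simp_rw [hsplit]
    rw [Finset.sum_add_distrib, ← sub_sub, ← ih]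
    rfl

lemma coeff_mul_congr {a a' w : R⟦X⟧} {d : ℕ} (h : ∀ i ≤ d, coeff i a = coeff i a') :
    coeff d (a * w) = coeff d (a' * w) := by
  rw [coeff_mul, coeff_mul]
  refine Finset.sum_congr rfl fun p hp => ?_
  rw [Finset.HasAntidiagonal.mem_antidiagonal] at hp
  rw [h p.1 (by omega)]

lemma phase2 (hstab : ∀ m, N ≤ m → lcIdeal I N = lcIdeal I m)
    (hg : g ∈ I) (hgo : ∀ i < N, coeff i g = 0) :
    g ∈ Ideal.span (↑((Sgen I N).image (wit I N)) : Set R⟦X⟧) := by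
  have key : g = ∑ c ∈ Sgen I N, (PowerSeries.mk fun j => chi I N g j c) * wit I N c := by
    apply PowerSeries.ext
    intro d
    have h1 : coeff d (seq2 I N g (d + 1)) = 0 :=
      (seq2_spec hstab hg hgo (d + 1)).2 d (by omega)
    rw [seq2_eq, map_sub, sub_eq_zero] at h1
    rw [h1, map_sum, map_sum]
    refine Finset.sum_congr rfl fun c hc => ?_
    refine coeff_mul_congr fun i hi => ?_
    rw [coeff_mk, map_sum]
    simp only [coeff_C_mul, coeff_X_pow, mul_ite, mul_one, mul_zero]
    rw [Finset.sum_ite_eq (Finset.range (d + 1)) i (fun j => chi I N g j c),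
      if_pos (Finset.mem_range.mpr (by omega))]
  rw [key]
  exact Ideal.sum_mem _ fun c hc => Ideal.mul_mem_left _ _
    (Ideal.subset_span (Finset.mem_coe.mpr (Finset.mem_image_of_mem _ hc)))


noncomputable def Gset (I : Ideal R⟦X⟧) (N : ℕ) : Finset R⟦X⟧ :=
  (Finset.range (N + 1)).biUnion fun n => (Sgen I n).image (wit I n)

lemma Gset_subset (I : Ideal R⟦X⟧) (N : ℕ) : ↑(Gset I N) ⊆ (I : Set R⟦X⟧) := by
  intro f hf
  rw [Finset.mem_coe, Gset, Finset.mem_biUnion] at hf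
  obtain ⟨n, -, hf⟩ := hf
  rw [Finset.mem_image] at hf
  obtain ⟨c, hc, rfl⟩ := hf
  exact (wit_spec I (Sgen_mem I hc)).1

lemma phase1 : ∀ m : ℕ, ∀ g ∈ I, (∀ i < N - m, coeff i g = 0) →
    ∃ r ∈ I, (∀ i < N, coeff i r = 0) ∧ g - r ∈ Ideal.span (↑(Gset I N) : Set R⟦X⟧) := by
  intro m
  induction m with
  | zero =>
    intro g hg h
    exact ⟨g, hg, fun i hi => h i (by omega), by simp⟩
  | succ m ih =>
    intro g hg h
    have hb : coeff (N - (m + 1)) g ∈ Ideal.span (↑(Sgen I (N - (m + 1))) : Set R) := by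
      rw [Sgen_spec]
      exact mem_lcIdeal_of I hg h
    set d := N - (m + 1) with hd
    set g' := g - ∑ c ∈ Sgen I d, C (pick (Sgen I d) (coeff d g) c) * wit I d c with hg'
    have hg'I : g' ∈ I := Ideal.sub_mem _ hg (Ideal.sum_mem _ fun c hc =>
      I.mul_mem_left _ (wit_spec I (Sgen_mem I hc)).1)
    have hg'o : ∀ i < N - m, coeff i g' = 0 := by
      intro i hi
      have hid : i ≤ d := by omega
      rw [hg', map_sub, map_sum]
      rcases lt_or_eq_of_le hid with hlt | heq
      · rw [h i (by omega), Finset.sum_eq_zero, sub_zero]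
        intro c hc
        rw [coeff_C_mul, (wit_spec I (Sgen_mem I hc)).2.1 i hlt, mul_zero]
      · rw [heq, sub_eq_zero]
        calc coeff d g = ∑ c ∈ Sgen I d, pick (Sgen I d) (coeff d g) c * c :=
              (pick_spec hb).symm
          _ = ∑ c ∈ Sgen I d, coeff d (C (pick (Sgen I d) (coeff d g) c) * wit I d c) := by
              refine Finset.sum_congr rfl fun c hc => ?_
              rw [coeff_C_mul, (wit_spec I (Sgen_mem I hc)).2.2]
    obtain ⟨r, hr, hro, hspan⟩ := ih g' hg'I hg'o
    refine ⟨r, hr, hro, ?_⟩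
    have hgr : g - r = (g' - r) + ∑ c ∈ Sgen I d, C (pick (Sgen I d) (coeff d g) c) * wit I d c := by
      rw [hg']; ring
    rw [hgr]
    refine Ideal.add_mem _ hspan (Ideal.sum_mem _ fun c hc => Ideal.mul_mem_left _ _
      (Ideal.subset_span ?_))
    simp only [Gset, Finset.coe_biUnion, Set.mem_iUnion, Finset.mem_coe, Finset.mem_biUnion]
    exact ⟨d, Finset.mem_range.mpr (by omega), Finset.mem_image_of_mem _ hc⟩

end HB2

theorem PowerSeries.isNoetherianRing_of {R : Type*} [CommRing R] [IsNoetherianRing R] :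
    IsNoetherianRing R⟦X⟧ := by
  rw [isNoetherianRing_iff_ideal_fg]
  intro I
  obtain ⟨N, hstab⟩ := (monotone_stabilizes_iff_noetherian.mpr inferInstance)
    ⟨HB.lcIdeal I, HB.lcIdeal_mono I⟩
  refine ⟨HB2.Gset I N, le_antisymm (Ideal.span_le.mpr (HB2.Gset_subset I N)) ?_⟩
  intro g hg
  letI : DecidableEq R⟦X⟧ := HB2.instDecEqPS
  obtain ⟨r, hr, hro, hspan⟩ := HB2.phase1 (I := I) (N := N) N g hg
    (fun i hi => absurd hi (by omega))
  have hr2 : r ∈ Ideal.span (↑((HB.Sgen I N).image (HB.wit I N)) : Set R⟦X⟧) :=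
    HB2.phase2 hstab hr hro
  have hsub : Ideal.span (↑((HB.Sgen I N).image (HB.wit I N)) : Set R⟦X⟧)
      ≤ Ideal.span (↑(HB2.Gset I N) : Set R⟦X⟧) := by
    refine Ideal.span_mono ?_
    intro f hf
    simp only [HB2.Gset, Finset.coe_biUnion, Set.mem_iUnion, Finset.mem_coe,
      Finset.mem_biUnion]
    exact ⟨N, Finset.mem_range.mpr (by omega), by simpa using hf⟩
  have : g = (g - r) + r := by ring
  rw [this]
  exact Ideal.add_mem _ hspan (hsub hr2)


/-! ### The key module-theoretic lemma -/


section Helpers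

variable {R M N : Type*} [CommRing R] [AddCommGroup M] [Module R M]
  [AddCommGroup N] [Module R N]

lemma card_dom_eq_card_ker_mul_card_range (f : M →ₗ[R] N) :
    Nat.card M = Nat.card (LinearMap.ker f) * Nat.card (LinearMap.range f) := by
  rw [Submodule.card_eq_card_quotient_mul_card (LinearMap.ker f)]
  congr 1
  exact Nat.card_congr f.quotKerEquivRange.toEquiv

lemma finite_of_finite_ker_of_finite_range (f : M →ₗ[R] N)
    (h1 : Finite (LinearMap.ker f)) (h2 : Finite (LinearMap.range f)) : Finite M := by
  have hq : Finite (M ⧸ LinearMap.ker f) := Finite.of_equiv _ f.quotKerEquivRange.symm.toEquiv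
  have h1' : Finite (↥(LinearMap.ker f).toAddSubgroup) := h1
  have hq' : Finite (M ⧸ (LinearMap.ker f).toAddSubgroup) := hq
  exact Finite.of_equiv _
    (AddSubgroup.addGroupEquivQuotientProdAddSubgroup
      (s := (LinearMap.ker f).toAddSubgroup)).symm

end Helpers

section Key

variable {R M : Type*} [CommRing R] [AddCommGroup M] [Module R M]

open LinearMap Submodule

theorem key_finite_iff [IsLocalRing R] [IsNoetherianRing R] [Module.Finite R M]
    (r : R) (hr : ¬ IsUnit r)
    (hfin : Finite (M ⧸ LinearMap.range (LinearMap.lsmul R M r))) :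
    Finite M ↔ Nat.card (M ⧸ LinearMap.range (LinearMap.lsmul R M r))
      = Nat.card (LinearMap.ker (LinearMap.lsmul R M r)) := by
  set f : Module.End R M := LinearMap.lsmul R M r with hf
  constructor
  · intro hM
    have h1 := Submodule.card_eq_card_quotient_mul_card (LinearMap.range f)
    have h2 := card_dom_eq_card_ker_mul_card_range f
    have hr0 : 0 < Nat.card (LinearMap.range f) :=
      Nat.pos_of_ne_zero (Nat.card_ne_zero.mpr ⟨⟨0⟩, Subtype.finite⟩)
    -- h1 : card M = card (range f) * card (M ⧸ range f)
    -- h2 : card M = card (ker f) * card (range f)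
    rw [h2, mul_comm] at h1
    exact (Nat.eq_of_mul_eq_mul_left hr0 h1).symm
  · intro hcard
    -- the kernel is finite
    have hq0 : Nat.card (M ⧸ LinearMap.range f) ≠ 0 :=
      Nat.card_ne_zero.mpr ⟨⟨0⟩, hfin⟩
    have hker : Finite (LinearMap.ker f) :=
      Nat.finite_of_card_ne_zero (hcard ▸ hq0)
    -- finiteness of all cokernels of powers
    have hcok : ∀ n : ℕ, Finite (M ⧸ LinearMap.range (f ^ n)) := by
      intro n
      induction n with
      | zero =>
        have : LinearMap.range ((f : Module.End R M) ^ 0) = ⊤ := by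
          rw [pow_zero]
          exact LinearMap.range_eq_top.mpr fun x => ⟨x, rfl⟩
        have hsub : Subsingleton (M ⧸ LinearMap.range (f ^ 0)) :=
          Submodule.Quotient.subsingleton_iff.mpr this
        exact Finite.of_subsingleton
      | succ n ih =>
        have hle : LinearMap.range (f ^ (n + 1)) ≤ LinearMap.range (f ^ n) := by
          rintro x ⟨y, rfl⟩
          exact ⟨f y, by rw [← Module.End.mul_apply, ← pow_succ]⟩
        let π : (M ⧸ LinearMap.range (f ^ (n + 1))) →ₗ[R] M ⧸ LinearMap.range (f ^ n) :=
          Submodule.mapQ _ _ LinearMap.id (by simpa using hle)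
        let α : (M ⧸ LinearMap.range f) →ₗ[R] M ⧸ LinearMap.range (f ^ (n + 1)) :=
          Submodule.mapQ _ _ (f ^ n) (by
            rintro x ⟨y, rfl⟩
            exact ⟨y, by rw [← Module.End.mul_apply, ← pow_succ]⟩)
        have hkerle : LinearMap.ker π ≤ LinearMap.range α := by
          intro z hz
          obtain ⟨x, rfl⟩ := Submodule.Quotient.mk_surjective _ z
          have hx : x ∈ LinearMap.range (f ^ n) := by
            rwa [LinearMap.mem_ker, Submodule.mapQ_apply, LinearMap.id_apply,
              Submodule.Quotient.mk_eq_zero] at hz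
          obtain ⟨y, rfl⟩ := hx
          exact ⟨Submodule.Quotient.mk y, by rw [Submodule.mapQ_apply]⟩
        have hα : Finite (LinearMap.range α) :=
          Finite.of_surjective α.rangeRestrict α.surjective_rangeRestrict
        have hkπ : Finite (LinearMap.ker π) :=
          Finite.of_injective (Submodule.inclusion hkerle) (Submodule.inclusion_injective hkerle)
        exact finite_of_finite_ker_of_finite_range π hkπ Subtype.finite
    -- the kernel chain stabilizes (Noetherian module)
    have hNoeth : IsNoetherian R M := inferInstance
    obtain ⟨n, hn⟩ := (monotone_stabilizes_iff_noetherian.mpr hNoeth)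
      ⟨fun n => LinearMap.ker (f ^ n), monotone_nat_of_le_succ fun n x hx => by
        rw [LinearMap.mem_ker, pow_succ', Module.End.mul_apply, LinearMap.mem_ker.mp hx,
          map_zero]⟩
    have hcomm : ∀ x : M, f ((f ^ n) x) = (f ^ (n + 1)) x := fun x => by
      rw [pow_succ', Module.End.mul_apply]
    have hJ : LinearMap.ker f ⊓ LinearMap.range (f ^ n) = ⊥ := by
      rw [eq_bot_iff]
      rintro y ⟨hy1, x, rfl⟩
      have hx : x ∈ LinearMap.ker (f ^ (n + 1)) := by
        rw [LinearMap.mem_ker, ← hcomm x]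
        exact LinearMap.mem_ker.mp hy1
      have hx' : x ∈ LinearMap.ker (f ^ n) := by
        have he : LinearMap.ker (f ^ n) = LinearMap.ker (f ^ (n + 1)) :=
          hn (n + 1) (Nat.le_succ n)
        rw [he]
        exact hx
      simp only [Submodule.mem_bot]
      exact LinearMap.mem_ker.mp hx'
    set Rn := LinearMap.range (f ^ n) with hRn
    set Rn1 := LinearMap.range (f ^ (n + 1)) with hRn1
    have hle : Rn1 ≤ Rn := by
      rintro x ⟨y, rfl⟩
      exact ⟨f y, by rw [← Module.End.mul_apply, ← pow_succ]⟩
    have hle1 : Rn1 ≤ LinearMap.range f := by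
      rintro x ⟨y, rfl⟩
      exact ⟨(f ^ n) y, hcomm y⟩
    let ψ : (M ⧸ Rn) →ₗ[R] M ⧸ Rn1 := Submodule.mapQ _ _ f (by
      rintro x ⟨y, rfl⟩
      exact ⟨y, (hcomm y).symm⟩)
    let β : (LinearMap.ker f) →ₗ[R] M ⧸ Rn := Rn.mkQ.comp (LinearMap.ker f).subtype
    have hβinj : Function.Injective β := by
      rw [← LinearMap.ker_eq_bot, eq_bot_iff]
      rintro ⟨x, hx⟩ hbx
      have hxRn : x ∈ Rn := by
        rwa [LinearMap.mem_ker, LinearMap.comp_apply, Submodule.coe_subtype,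
          Submodule.mkQ_apply, Submodule.Quotient.mk_eq_zero] at hbx
      have hmem : x ∈ LinearMap.ker f ⊓ Rn := ⟨hx, hxRn⟩
      rw [hJ] at hmem
      simp only [Submodule.mem_bot] at hmem
      simp [hmem]
    have hβrange : LinearMap.range β = LinearMap.ker ψ := by
      apply le_antisymm
      · rintro z ⟨⟨x, hx⟩, rfl⟩
        rw [LinearMap.mem_ker]
        show ψ (Submodule.Quotient.mk x) = 0
        rw [Submodule.mapQ_apply, LinearMap.mem_ker.mp hx]
        exact Submodule.Quotient.mk_zero _
      · intro z hz
        obtain ⟨x, rfl⟩ := Submodule.Quotient.mk_surjective _ z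
        have hfx : f x ∈ Rn1 := by
          rwa [LinearMap.mem_ker, Submodule.mapQ_apply, Submodule.Quotient.mk_eq_zero] at hz
        obtain ⟨y, hy⟩ := hfx
        have hker : x - (f ^ n) y ∈ LinearMap.ker f := by
          rw [LinearMap.mem_ker, map_sub, hcomm y, hy, sub_self]
        refine ⟨⟨x - (f ^ n) y, hker⟩, ?_⟩
        show Submodule.Quotient.mk (x - (f ^ n) y) = Submodule.Quotient.mk x
        rw [Submodule.Quotient.eq]
        rw [sub_sub_cancel_left]
        exact Submodule.neg_mem _ ⟨y, rfl⟩
    have hψcard : Nat.card (LinearMap.ker ψ) = Nat.card (LinearMap.ker f) := by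
      rw [← hβrange]
      exact (Nat.card_congr (Equiv.ofInjective β hβinj)).symm
    have hrψeq : LinearMap.range ψ = (LinearMap.range f).map Rn1.mkQ := by
      apply le_antisymm
      · rintro z ⟨w, rfl⟩
        obtain ⟨x, rfl⟩ := Submodule.Quotient.mk_surjective _ w
        refine ⟨f x, ⟨x, rfl⟩, ?_⟩
        show Rn1.mkQ (f x) = (Submodule.mapQ Rn Rn1 f _) (Submodule.Quotient.mk x)
        rw [Submodule.mkQ_apply, Submodule.mapQ_apply]
      · rintro z ⟨y, ⟨x, rfl⟩, rfl⟩
        refine ⟨Submodule.Quotient.mk x, ?_⟩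
        show (Submodule.mapQ Rn Rn1 f _) (Submodule.Quotient.mk x) = Rn1.mkQ (f x)
        rw [Submodule.mkQ_apply, Submodule.mapQ_apply]
    have hA : Nat.card (M ⧸ Rn)
        = Nat.card (LinearMap.ker ψ) * Nat.card (LinearMap.range ψ) :=
      card_dom_eq_card_ker_mul_card_range ψ
    have hB : Nat.card (M ⧸ Rn1)
        = Nat.card (LinearMap.range ψ) * Nat.card (M ⧸ LinearMap.range f) := by
      rw [Submodule.card_eq_card_quotient_mul_card (M := M ⧸ Rn1) (LinearMap.range ψ)]
      congr 1
      rw [hrψeq]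
      exact Nat.card_congr
        (Submodule.quotientQuotientEquivQuotient Rn1 (LinearMap.range f) hle1).toEquiv
    have hq1 : Nat.card (M ⧸ Rn) = Nat.card (M ⧸ Rn1) := by
      rw [hA, hB, hψcard, ← hcard]
      exact mul_comm _ _
    let π : (M ⧸ Rn1) →ₗ[R] M ⧸ Rn := Submodule.mapQ _ _ LinearMap.id (by simpa using hle)
    have hπsurj : Function.Surjective π := by
      intro z
      obtain ⟨x, rfl⟩ := Submodule.Quotient.mk_surjective _ z
      exact ⟨Submodule.Quotient.mk x, by rw [Submodule.mapQ_apply, LinearMap.id_apply]⟩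
    have hπcard : Nat.card (M ⧸ Rn1)
        = Nat.card (LinearMap.ker π) * Nat.card (LinearMap.range π) :=
      card_dom_eq_card_ker_mul_card_range π
    have hrπ : Nat.card (LinearMap.range π) = Nat.card (M ⧸ Rn) := by
      rw [LinearMap.range_eq_top.mpr hπsurj]
      exact Nat.card_congr Submodule.topEquiv.toEquiv
    have h0 : Nat.card (M ⧸ Rn) ≠ 0 := Nat.card_ne_zero.mpr ⟨⟨0⟩, hcok n⟩
    have hkπ1 : Nat.card (LinearMap.ker π) = 1 := by
      rw [hrπ, ← hq1] at hπcard
      refine Nat.eq_of_mul_eq_mul_right (Nat.pos_of_ne_zero h0) ?_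
      rw [one_mul]
      exact hπcard.symm
    have hss : Subsingleton (LinearMap.ker π) := (Nat.card_eq_one_iff_unique.mp hkπ1).1
    have hsub2 : Rn ≤ Rn1 := by
      intro x hx
      have h1 : Submodule.Quotient.mk (p := Rn1) x ∈ LinearMap.ker π := by
        rw [LinearMap.mem_ker, Submodule.mapQ_apply, LinearMap.id_apply,
          Submodule.Quotient.mk_eq_zero]
        exact hx
      have h2 : (⟨_, h1⟩ : LinearMap.ker π) = 0 := Subsingleton.elim _ _
      have h3 : Submodule.Quotient.mk (p := Rn1) x = 0 := congrArg Subtype.val h2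
      rwa [Submodule.Quotient.mk_eq_zero] at h3
    have hRneq : Rn = Rn1 := le_antisymm hsub2 hle
    have hFG : Rn.FG := by
      rw [hRn, LinearMap.range_eq_map]
      exact Submodule.FG.map _ (Module.finite_def.mp ‹Module.Finite R M›)
    have hNak : Rn = ⊥ := by
      refine Submodule.eq_bot_of_le_smul_of_le_jacobson_bot (Ideal.span {r}) Rn hFG ?_ ?_
      · intro x hx
        have hx1 : x ∈ Rn1 := hRneq ▸ hx
        obtain ⟨y, rfl⟩ := hx1
        have hry : (f ^ (n + 1)) y = r • ((f ^ n) y) := by rw [← hcomm y]; rfl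
        rw [hry]
        exact Submodule.smul_mem_smul (Ideal.subset_span rfl) ⟨y, rfl⟩
      · rw [IsLocalRing.jacobson_eq_maximalIdeal ⊥ bot_ne_top, Ideal.span_le,
          Set.singleton_subset_iff]
        exact (IsLocalRing.mem_maximalIdeal r).mpr (mem_nonunits_iff.mpr hr)
    have hfinRn : Finite (M ⧸ Rn) := hcok n
    exact Finite.of_equiv _ (Submodule.quotEquivOfEqBot Rn hNak).toEquiv

end Key


/-! ### The main theorem -/

/-- For a finitely generated torsion module `X` over `Λ = ℤ_p⟦T⟧` with `X/TX`
finite, `X` itself is finite if and only if `#(X/TX) = #(X[T])`. -/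
theorem stmt3 (p : ℕ) [Fact p.Prime] (hp : Odd p)
    (X : Type*) [AddCommGroup X] [Module (PowerSeries ℤ_[p]) X]
    [Module ℤ_[p] X] [IsScalarTower ℤ_[p] (PowerSeries ℤ_[p]) X]
    (hfg : Module.Finite (PowerSeries ℤ_[p]) X)
    (htors : Module.IsTorsion (PowerSeries ℤ_[p]) X)
    (hfin : Finite (X ⧸ LinearMap.range (Tmul p X))) :
    Finite X ↔
      Nat.card (X ⧸ LinearMap.range (Tmul p X)) = Nat.card (LinearMap.ker (Tmul p X)) := by
  haveI : IsNoetherianRing (PowerSeries ℤ_[p]) := PowerSeries.isNoetherianRing_of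
  haveI := hfg
  set g : X →ₗ[PowerSeries ℤ_[p]] X := LinearMap.lsmul (PowerSeries ℤ_[p]) X PowerSeries.X
    with hgdef
  have hrgeq : LinearMap.range (Tmul p X) = Submodule.restrictScalars ℤ_[p] (LinearMap.range g) :=
    rfl
  have hkereq : LinearMap.ker (Tmul p X) = Submodule.restrictScalars ℤ_[p] (LinearMap.ker g) :=
    rfl
  have e1 : (X ⧸ LinearMap.range (Tmul p X)) ≃ (X ⧸ LinearMap.range g) := by
    rw [hrgeq]
    exact (Submodule.Quotient.restrictScalarsEquiv ℤ_[p] (LinearMap.range g)).toEquiv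
  have e2 : (LinearMap.ker (Tmul p X)) ≃ (LinearMap.ker g) := by
    rw [hkereq]
    exact ⟨fun x => ⟨x.1, x.2⟩, fun x => ⟨x.1, x.2⟩, fun _ => rfl, fun _ => rfl⟩
  have hfin' : Finite (X ⧸ LinearMap.range g) := Finite.of_equiv _ e1
  have hXnu : ¬ IsUnit (PowerSeries.X : PowerSeries ℤ_[p]) := by
    rw [PowerSeries.isUnit_iff_constantCoeff, PowerSeries.constantCoeff_X]
    exact not_isUnit_zero
  rw [Nat.card_congr e1, Nat.card_congr e2]
  exact key_finite_iff (R := PowerSeries ℤ_[p]) (M := X) PowerSeries.X hXnu hfin'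
end

section
/- Let p ≥ 7 be a prime number, let a be an integer with a² ≤ 4p, and let ℓ ∈ {2, 3} be a prime dividing p + 1 − a. If p divides the product (p + 1 − a)(p + 1 + a), then ℓ = 3, a = −1, and p ≡ 1 (mod 3). -/
/-- For a prime `p ≥ 7`, an integer `a` with `a² ≤ 4p`, and `ℓ ∈ {2, 3}` a prime
dividing `p + 1 − a`: if `p` divides `(p + 1 − a)(p + 1 + a)`, then `ℓ = 3`,
`a = −1` and `p ≡ 1 (mod 3)`. -/
theorem stmt7 (p : ℕ) (hp : p.Prime) (hp7 : 7 ≤ p) (a : ℤ) (ha : a ^ 2 ≤ 4 * p)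
    (ℓ : ℕ) (hℓ : ℓ = 2 ∨ ℓ = 3) (hℓdvd : (ℓ : ℤ) ∣ (p + 1 - a))
    (hpdvd : (p : ℤ) ∣ ((p + 1 - a) * (p + 1 + a))) :
    ℓ = 3 ∧ a = -1 ∧ p % 3 = 1 := by
  have hp7' : (7 : ℤ) ≤ (p : ℤ) := by exact_mod_cast hp7
  have hpZ : Prime ((p : ℤ)) := by rw [Int.prime_iff_natAbs_prime]; simpa using hp
  have h1 : (p : ℤ) ∣ (1 - a) * (1 + a) := by
    have h2 : (1 - a) * (1 + a) = (↑p + 1 - a) * (↑p + 1 + a) - ↑p * (↑p + 2) := by ring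
    rw [h2]
    exact dvd_sub hpdvd ⟨(p : ℤ) + 2, rfl⟩
  -- a = 1 or a = -1
  have haone : a = 1 ∨ a = -1 := by
    rcases hpZ.dvd_mul.mp h1 with h | h
    · left
      by_contra hne
      have h0 : (1 : ℤ) - a ≠ 0 := by intro h'; apply hne; linarith
      have h3 : (p : ℤ) ≤ |1 - a| := Int.le_of_dvd (abs_pos.mpr h0) ((dvd_abs _ _).mpr h)
      rcases abs_cases (1 - a) with ⟨he, _⟩ | ⟨he, _⟩ <;> nlinarith
    · right
      by_contra hne
      have h0 : (1 : ℤ) + a ≠ 0 := by intro h'; apply hne; linarith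
      have h3 : (p : ℤ) ≤ |1 + a| := Int.le_of_dvd (abs_pos.mpr h0) ((dvd_abs _ _).mpr h)
      rcases abs_cases (1 + a) with ⟨he, _⟩ | ⟨he, _⟩ <;> nlinarith
  rcases haone with rfl | rfl
  · -- a = 1 : ℓ divides p, impossible
    exfalso
    have hd : (ℓ : ℤ) ∣ (p : ℤ) := by simpa using hℓdvd
    have hd' : ℓ ∣ p := Int.natCast_dvd_natCast.mp hd
    rcases hp.eq_one_or_self_of_dvd ℓ hd' with h | h <;> omega
  · -- a = -1 : ℓ divides p + 2
    have hd : (ℓ : ℤ) ∣ ((p : ℤ) + 2) := by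
      have : ((p : ℤ) + 1 - (-1)) = (p : ℤ) + 2 := by ring
      rwa [this] at hℓdvd
    have hd' : ℓ ∣ p + 2 := by exact_mod_cast hd
    rcases hℓ with rfl | rfl
    · exfalso
      have h2p : 2 ∣ p := by omega
      rcases hp.eq_one_or_self_of_dvd 2 h2p with h | h <;> omega
    · exact ⟨rfl, rfl, by omega⟩
end

section
/- Let p be an odd prime. Then the number of pairs (a, b) ∈ 𝔽_p × 𝔽_p with 4a³ + 27b² ≠ 0 such that #E_{a,b}(𝔽_p) ≡ 0 (mod p) equals the number of pairs (a, b) ∈ 𝔽_p × 𝔽_p with 4a³ + 27b² ≠ 0 such that #E_{a,b}(𝔽_p) ≡ 2 (mod p). Equivalently, with 𝔖_p = {(a,b) : 4a³+27b² ≠ 0, #E_{a,b}(𝔽_p) ≡ 0 mod p} and 𝔗_p = {(a,b) : 4a³+27b² ≠ 0, #E_{a,b}(𝔽_p) ≡ 0 or 2 mod p}, one has #𝔗_p = 2 · #𝔖_p. -/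
/-- The short Weierstrass curve `y² = x³ + ax + b` over `ℤ/pℤ`. -/
def Wcurve (p : ℕ) (a b : ZMod p) : WeierstrassCurve (ZMod p) :=
  ⟨0, 0, 0, a, b⟩

/-- The number of `𝔽_p`-rational points of `y² = x³ + ax + b`,
including the point at infinity. -/
noncomputable def numPoints (p : ℕ) (a b : ZMod p) : ℕ :=
  Nat.card (Wcurve p a b).toAffine.Point

section Aux

variable {p : ℕ} [Fact p.Prime]

open Finset WeierstrassCurve

lemma Wcurve_Δ (a b : ZMod p) :
    (Wcurve p a b).Δ = -16 * (4 * a ^ 3 + 27 * b ^ 2) := by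
  simp only [WeierstrassCurve.Δ, WeierstrassCurve.b₂, WeierstrassCurve.b₄, WeierstrassCurve.b₆,
    WeierstrassCurve.b₈, Wcurve]
  ring

lemma sixteen_ne_zero (hp : Odd p) : (16 : ZMod p) ≠ 0 := by
  have : ((16 : ℕ) : ZMod p) ≠ 0 := by
    rw [Ne, ZMod.natCast_eq_zero_iff]
    intro h
    have hpp := (Fact.out : p.Prime)
    have h2 : p ∣ 2 := hpp.dvd_of_dvd_pow (n := 4) (by norm_num at h ⊢; exact h)
    have := (Nat.prime_dvd_prime_iff_eq hpp Nat.prime_two).mp h2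
    subst this
    simp [Nat.odd_iff] at hp
  simpa using this

lemma Wcurve_Δ_ne_zero {a b : ZMod p} (hp : Odd p) (h : 4 * a ^ 3 + 27 * b ^ 2 ≠ 0) :
    (Wcurve p a b).Δ ≠ 0 := by
  rw [Wcurve_Δ]
  refine mul_ne_zero ?_ h
  have h16 := sixteen_ne_zero (p := p) hp
  intro h'
  apply h16
  have : (16 : ZMod p) = -(-16 : ZMod p) := by ring
  rw [this, h', neg_zero]

lemma Wcurve_equation_iff (a b x y : ZMod p) :
    (Wcurve p a b).toAffine.Equation x y ↔ y ^ 2 = x ^ 3 + a * x + b := by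
  rw [WeierstrassCurve.Affine.equation_iff]
  simp only [Wcurve]
  constructor <;> intro h <;> linear_combination h

/-- The points of a nonsingular curve are the point at infinity plus the affine solutions. -/
noncomputable def pointEquiv (a b : ZMod p) (hΔ : (Wcurve p a b).Δ ≠ 0) :
    (Wcurve p a b).toAffine.Point ≃
      Option {xy : ZMod p × ZMod p // xy.2 ^ 2 = xy.1 ^ 3 + a * xy.1 + b} where
  toFun P :=
    match P with
    | .zero => none
    | @WeierstrassCurve.Affine.Point.some _ _ _ x y h =>
        some ⟨(x, y), (Wcurve_equation_iff a b x y).mp h.1⟩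
  invFun o :=
    match o with
    | none => .zero
    | some ⟨(x, y), h⟩ =>
        .some x y (((Wcurve p a b).toAffine.equation_iff_nonsingular_of_Δ_ne_zero hΔ).mp
          ((Wcurve_equation_iff a b x y).mpr h))
  left_inv P := by
    cases P with
    | zero => rfl
    | some h => rfl
  right_inv o := by
    rcases o with - | ⟨⟨x, y⟩, h⟩ <;> rfl

/-- The character sum attached to `y² = x³ + ax + b`. -/
noncomputable def charSum (p : ℕ) [Fact p.Prime] (a b : ZMod p) : ℤ :=
  ∑ x : ZMod p, quadraticChar (ZMod p) (x ^ 3 + a * x + b)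

lemma ringChar_ne_two (hp : Odd p) : ringChar (ZMod p) ≠ 2 := by
  rw [ZMod.ringChar_zmod_n]
  rintro rfl
  simp [Nat.odd_iff] at hp

lemma card_sqrt (hp : Odd p) (c : ZMod p) :
    (Nat.card {y : ZMod p // y ^ 2 = c} : ℤ) = quadraticChar (ZMod p) c + 1 := by
  have h := quadraticChar_card_sqrts (ringChar_ne_two hp) c
  rw [← h, Set.toFinset_card, Nat.card_eq_fintype_card]
  rfl

lemma numPoints_eq (hp : Odd p) {a b : ZMod p} (h : 4 * a ^ 3 + 27 * b ^ 2 ≠ 0) :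
    (numPoints p a b : ℤ) = p + 1 + charSum p a b := by
  have hΔ := Wcurve_Δ_ne_zero hp h
  rw [numPoints, Nat.card_congr (pointEquiv a b hΔ),
    Nat.card_congr
      (Equiv.optionCongr (Equiv.subtypeProdEquivSigmaSubtype
        (fun x y : ZMod p => y ^ 2 = x ^ 3 + a * x + b))),
    Nat.card_eq_fintype_card, Fintype.card_option, Fintype.card_sigma]
  push_cast
  have : ∀ x : ZMod p,
      (Fintype.card {y : ZMod p // y ^ 2 = x ^ 3 + a * x + b} : ℤ)
        = quadraticChar (ZMod p) (x ^ 3 + a * x + b) + 1 := by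
    intro x
    rw [← card_sqrt hp (x ^ 3 + a * x + b), Nat.card_eq_fintype_card]
  rw [Finset.sum_congr rfl fun x _ => this x, Finset.sum_add_distrib, Finset.sum_const,
    Finset.card_univ, ZMod.card]
  simp [charSum]
  ring

lemma charSum_twist (hp : Odd p) (a b d : ZMod p) (hd : ¬IsSquare d) :
    charSum p (d ^ 2 * a) (d ^ 3 * b) = -charSum p a b := by
  have hd0 : d ≠ 0 := by rintro rfl; exact hd ⟨0, by ring⟩
  have hχ : quadraticChar (ZMod p) d = -1 :=
    quadraticChar_neg_one_iff_not_isSquare.mpr hd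
  unfold charSum
  rw [← Equiv.sum_comp (Equiv.mulLeft₀ d hd0)
    (fun x => (quadraticChar (ZMod p) (x ^ 3 + d ^ 2 * a * x + d ^ 3 * b) : ℤ)),
    ← Finset.sum_neg_distrib]
  refine Finset.sum_congr rfl fun x _ => ?_
  have hmul : (Equiv.mulLeft₀ d hd0) x = d * x := rfl
  have key : (Equiv.mulLeft₀ d hd0) x ^ 3 + d ^ 2 * a * ((Equiv.mulLeft₀ d hd0) x) + d ^ 3 * b
      = d ^ 3 * (x ^ 3 + a * x + b) := by
    rw [hmul]; ring
  rw [key, map_mul, map_pow, hχ]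
  ring

lemma numPoints_add_twist (hp : Odd p) {a b : ZMod p} (h : 4 * a ^ 3 + 27 * b ^ 2 ≠ 0)
    {d : ZMod p} (hd : ¬IsSquare d) :
    (numPoints p a b : ℤ) + numPoints p (d ^ 2 * a) (d ^ 3 * b) = 2 * p + 2 := by
  have hd0 : d ≠ 0 := by rintro rfl; exact hd ⟨0, by ring⟩
  have h' : 4 * (d ^ 2 * a) ^ 3 + 27 * (d ^ 3 * b) ^ 2 ≠ 0 := by
    have : 4 * (d ^ 2 * a) ^ 3 + 27 * (d ^ 3 * b) ^ 2
        = d ^ 6 * (4 * a ^ 3 + 27 * b ^ 2) := by ring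
    rw [this]
    exact mul_ne_zero (pow_ne_zero 6 hd0) h
  rw [numPoints_eq hp h, numPoints_eq hp h', charSum_twist hp a b d hd]
  ring

lemma twist_disc {a b d : ZMod p} (h : 4 * a ^ 3 + 27 * b ^ 2 ≠ 0) (hd0 : d ≠ 0) :
    4 * (d ^ 2 * a) ^ 3 + 27 * (d ^ 3 * b) ^ 2 ≠ 0 := by
  have : 4 * (d ^ 2 * a) ^ 3 + 27 * (d ^ 3 * b) ^ 2
      = d ^ 6 * (4 * a ^ 3 + 27 * b ^ 2) := by ring
  rw [this]
  exact mul_ne_zero (pow_ne_zero 6 hd0) h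

lemma mod_shift (hp : Odd p) {N N' : ℕ} (h : (N : ℤ) + N' = 2 * p + 2) :
    (N % p = 0 → N' % p = 2) ∧ (N % p = 2 → N' % p = 0) := by
  have hp3 : 3 ≤ p := by
    have hpp := (Fact.out : p.Prime)
    have := Nat.odd_iff.mp hp
    have := hpp.two_le
    omega
  haveI : NeZero p := ⟨by omega⟩
  have hcast : (N' : ZMod p) = 2 - (N : ZMod p) := by
    have := congrArg (fun z : ℤ => (z : ZMod p)) h
    push_cast at this
    rw [ZMod.natCast_self] at this
    linear_combination this
  have hvN : (N : ZMod p).val = N % p := ZMod.val_natCast p N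
  have hvN' : (N' : ZMod p).val = N' % p := ZMod.val_natCast p N'
  have hval2 : ((2 : ZMod p)).val = 2 := by
    have : ((2 : ℕ) : ZMod p) = (2 : ZMod p) := by push_cast; ring
    rw [← this, ZMod.val_natCast, Nat.mod_eq_of_lt (by omega)]
  constructor
  · intro h0
    have hN0 : (N : ZMod p) = 0 := by
      rw [← ZMod.natCast_mod, h0, Nat.cast_zero]
    rw [← hvN', hcast, hN0, sub_zero, hval2]
  · intro h2
    have hN2 : (N : ZMod p) = 2 := by
      rw [← ZMod.natCast_mod, h2]
      push_cast; ring
    rw [← hvN', hcast, hN2, sub_self, ZMod.val_zero]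

end Aux

/-- For an odd prime `p`, the number of pairs `(a,b)` with `4a³+27b² ≠ 0` and
`#E_{a,b}(𝔽_p) ≡ 0 (mod p)` equals the number with `#E_{a,b}(𝔽_p) ≡ 2 (mod p)`;
equivalently `#𝔗_p = 2·#𝔖_p`. -/
theorem stmt12 (p : ℕ) [Fact p.Prime] (hp : Odd p) :
    (Nat.card {ab : ZMod p × ZMod p //
        4 * ab.1 ^ 3 + 27 * ab.2 ^ 2 ≠ 0 ∧ numPoints p ab.1 ab.2 % p = 0}
      = Nat.card {ab : ZMod p × ZMod p //
        4 * ab.1 ^ 3 + 27 * ab.2 ^ 2 ≠ 0 ∧ numPoints p ab.1 ab.2 % p = 2}) ∧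
    (Nat.card {ab : ZMod p × ZMod p //
        4 * ab.1 ^ 3 + 27 * ab.2 ^ 2 ≠ 0 ∧
          (numPoints p ab.1 ab.2 % p = 0 ∨ numPoints p ab.1 ab.2 % p = 2)}
      = 2 * Nat.card {ab : ZMod p × ZMod p //
        4 * ab.1 ^ 3 + 27 * ab.2 ^ 2 ≠ 0 ∧ numPoints p ab.1 ab.2 % p = 0}) := by
  classical
  obtain ⟨d, hd⟩ := FiniteField.exists_nonsquare (ringChar_ne_two hp)
  have hd0 : d ≠ 0 := by rintro rfl; exact hd ⟨0, by ring⟩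
  have hdinv : ¬IsSquare d⁻¹ := by
    rintro ⟨s, hs⟩
    exact hd ⟨s⁻¹, by rw [← mul_inv, ← hs, inv_inv]⟩
  have hdinv0 : d⁻¹ ≠ 0 := inv_ne_zero hd0
  -- the two twist directions
  have fwd : ∀ a b : ZMod p, 4 * a ^ 3 + 27 * b ^ 2 ≠ 0 → numPoints p a b % p = 0 →
      4 * (d ^ 2 * a) ^ 3 + 27 * (d ^ 3 * b) ^ 2 ≠ 0 ∧
        numPoints p (d ^ 2 * a) (d ^ 3 * b) % p = 2 := by
    intro a b hD h0
    refine ⟨twist_disc hD hd0, ?_⟩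
    exact (mod_shift hp (numPoints_add_twist hp hD hd)).1 h0
  have bwd : ∀ a b : ZMod p, 4 * a ^ 3 + 27 * b ^ 2 ≠ 0 → numPoints p a b % p = 2 →
      4 * (d⁻¹ ^ 2 * a) ^ 3 + 27 * (d⁻¹ ^ 3 * b) ^ 2 ≠ 0 ∧
        numPoints p (d⁻¹ ^ 2 * a) (d⁻¹ ^ 3 * b) % p = 0 := by
    intro a b hD h2
    refine ⟨twist_disc hD hdinv0, ?_⟩
    have hD' := twist_disc hD hdinv0
    have hsum := numPoints_add_twist hp hD' (d := d) hd
    have hab : d ^ 2 * (d⁻¹ ^ 2 * a) = a ∧ d ^ 3 * (d⁻¹ ^ 3 * b) = b := by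
      constructor <;> field_simp
    rw [hab.1, hab.2] at hsum
    have := (mod_shift hp (by linarith [hsum] : ((numPoints p a b : ℤ)
        + numPoints p (d⁻¹ ^ 2 * a) (d⁻¹ ^ 3 * b) = 2 * p + 2))).2 h2
    exact this
  have e : {ab : ZMod p × ZMod p //
        4 * ab.1 ^ 3 + 27 * ab.2 ^ 2 ≠ 0 ∧ numPoints p ab.1 ab.2 % p = 0}
      ≃ {ab : ZMod p × ZMod p //
        4 * ab.1 ^ 3 + 27 * ab.2 ^ 2 ≠ 0 ∧ numPoints p ab.1 ab.2 % p = 2} :=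
    { toFun := fun x => ⟨(d ^ 2 * x.val.1, d ^ 3 * x.val.2),
        fwd x.val.1 x.val.2 x.prop.1 x.prop.2⟩
      invFun := fun x => ⟨(d⁻¹ ^ 2 * x.val.1, d⁻¹ ^ 3 * x.val.2),
        bwd x.val.1 x.val.2 x.prop.1 x.prop.2⟩
      left_inv := fun x => by
        apply Subtype.ext
        apply Prod.ext <;> simp <;> field_simp
      right_inv := fun x => by
        apply Subtype.ext
        apply Prod.ext <;> simp <;> field_simp }
  have h1 : Nat.card {ab : ZMod p × ZMod p //
        4 * ab.1 ^ 3 + 27 * ab.2 ^ 2 ≠ 0 ∧ numPoints p ab.1 ab.2 % p = 0}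
      = Nat.card {ab : ZMod p × ZMod p //
        4 * ab.1 ^ 3 + 27 * ab.2 ^ 2 ≠ 0 ∧ numPoints p ab.1 ab.2 % p = 2} :=
    Nat.card_congr e
  refine ⟨h1, ?_⟩
  -- split the union
  have hunion : {ab : ZMod p × ZMod p |
        4 * ab.1 ^ 3 + 27 * ab.2 ^ 2 ≠ 0 ∧
          (numPoints p ab.1 ab.2 % p = 0 ∨ numPoints p ab.1 ab.2 % p = 2)}
      = {ab : ZMod p × ZMod p |
          4 * ab.1 ^ 3 + 27 * ab.2 ^ 2 ≠ 0 ∧ numPoints p ab.1 ab.2 % p = 0}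
        ∪ {ab : ZMod p × ZMod p |
          4 * ab.1 ^ 3 + 27 * ab.2 ^ 2 ≠ 0 ∧ numPoints p ab.1 ab.2 % p = 2} := by
    ext ab
    simp only [Set.mem_setOf_eq, Set.mem_union]
    tauto
  have hdisj : Disjoint
      {ab : ZMod p × ZMod p |
          4 * ab.1 ^ 3 + 27 * ab.2 ^ 2 ≠ 0 ∧ numPoints p ab.1 ab.2 % p = 0}
      {ab : ZMod p × ZMod p |
          4 * ab.1 ^ 3 + 27 * ab.2 ^ 2 ≠ 0 ∧ numPoints p ab.1 ab.2 % p = 2} := by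
    rw [Set.disjoint_left]
    rintro ab ⟨-, h0⟩ ⟨-, h2⟩
    omega
  have hA : Nat.card {ab : ZMod p × ZMod p //
        4 * ab.1 ^ 3 + 27 * ab.2 ^ 2 ≠ 0 ∧ numPoints p ab.1 ab.2 % p = 0}
      = Set.ncard {ab : ZMod p × ZMod p |
          4 * ab.1 ^ 3 + 27 * ab.2 ^ 2 ≠ 0 ∧ numPoints p ab.1 ab.2 % p = 0} :=
    Nat.card_coe_set_eq _
  have hB : Nat.card {ab : ZMod p × ZMod p //
        4 * ab.1 ^ 3 + 27 * ab.2 ^ 2 ≠ 0 ∧ numPoints p ab.1 ab.2 % p = 2}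
      = Set.ncard {ab : ZMod p × ZMod p |
          4 * ab.1 ^ 3 + 27 * ab.2 ^ 2 ≠ 0 ∧ numPoints p ab.1 ab.2 % p = 2} :=
    Nat.card_coe_set_eq _
  have hU : Nat.card {ab : ZMod p × ZMod p //
        4 * ab.1 ^ 3 + 27 * ab.2 ^ 2 ≠ 0 ∧
          (numPoints p ab.1 ab.2 % p = 0 ∨ numPoints p ab.1 ab.2 % p = 2)}
      = Set.ncard {ab : ZMod p × ZMod p |
          4 * ab.1 ^ 3 + 27 * ab.2 ^ 2 ≠ 0 ∧
            (numPoints p ab.1 ab.2 % p = 0 ∨ numPoints p ab.1 ab.2 % p = 2)} :=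
    Nat.card_coe_set_eq _
  rw [hU, hunion, Set.ncard_union_eq hdisj (Set.toFinite _) (Set.toFinite _), hA, ← hA, ← hB,
    ← h1, two_mul]
end

section
/- A finite abelian group G admits a nondegenerate alternating ℤ-bilinear pairing β : G × G → ℚ/ℤ if and only if there exists a finite abelian group H such that G is isomorphic to H × H. -/
open AddCircle DirectSum

set_option maxHeartbeats 1000000

universe u

notation "QZ" => AddCircle (1 : ℚ)

noncomputable def qgen (n : ℕ) : QZ := ((1 / (n:ℚ) * 1 : ℚ) : QZ)

lemma qgen_order (n : ℕ) (hn : 0 < n) : addOrderOf (qgen n) = n := by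
  have := AddCircle.addOrderOf_div_of_gcd_eq_one (p := (1:ℚ)) (m := 1) (n := n) hn
    (Nat.gcd_one_left n)
  simpa [qgen] using this

lemma qgen_nsmul (n : ℕ) (hn : 0 < n) : n • qgen n = 0 := by
  rw [← addOrderOf_dvd_iff_nsmul_eq_zero, qgen_order n hn]

noncomputable def zchar (n : ℕ) (hn : 0 < n) : ZMod n →+ QZ :=
  ZMod.lift n ⟨zmultiplesHom QZ (qgen n), by
    simpa [zmultiplesHom_apply, natCast_zsmul] using qgen_nsmul n hn⟩

lemma zchar_coe (n : ℕ) (hn : 0 < n) (k : ℤ) : zchar n hn (k : ZMod n) = k • qgen n := by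
  simp [zchar, ZMod.lift_coe, zmultiplesHom_apply]

noncomputable def zpair (n : ℕ) (hn : 0 < n) : ZMod n →+ ZMod n →+ QZ :=
  ZMod.lift n ⟨zmultiplesHom (ZMod n →+ QZ) (zchar n hn), by
    ext x
    simp only [zmultiplesHom_apply, AddMonoidHom.coe_smul, Pi.smul_apply,
      AddMonoidHom.zero_apply]
    rw [← map_zsmul]
    have : ((n:ℤ) • x : ZMod n) = 0 := by simp [zsmul_eq_mul]
    rw [this, map_zero]⟩

lemma zpair_coe (n : ℕ) (hn : 0 < n) (j k : ℤ) :
    zpair n hn (j : ZMod n) (k : ZMod n) = (j * k) • qgen n := by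
  simp [zpair, ZMod.lift_coe, zmultiplesHom_apply, zchar_coe, mul_comm, mul_zsmul]

lemma zpair_symm (n : ℕ) (hn : 0 < n) (a b : ZMod n) : zpair n hn a b = zpair n hn b a := by
  obtain ⟨j, rfl⟩ := ZMod.intCast_surjective a
  obtain ⟨k, rfl⟩ := ZMod.intCast_surjective b
  rw [zpair_coe, zpair_coe, mul_comm]

lemma zpair_nondeg (n : ℕ) (hn : 0 < n) (a : ZMod n) (h : ∀ b, zpair n hn a b = 0) :
    a = 0 := by
  obtain ⟨j, rfl⟩ := ZMod.intCast_surjective a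
  have := h 1
  rw [show (1 : ZMod n) = ((1:ℤ) : ZMod n) by simp, zpair_coe, mul_one] at this
  rw [ZMod.intCast_zmod_eq_zero_iff_dvd]
  have hd : (addOrderOf (qgen n) : ℤ) ∣ j := addOrderOf_dvd_iff_zsmul_eq_zero.mpr this
  rwa [qgen_order n hn] at hd

section pi
variable {ι : Type} [Fintype ι] (n : ι → ℕ) (hn : ∀ i, 0 < n i)

noncomputable def pipair : ((i : ι) → ZMod (n i)) →+ ((i : ι) → ZMod (n i)) →+ QZ where
  toFun x := ∑ i, (zpair (n i) (hn i) (x i)).comp (Pi.evalAddMonoidHom (fun i => ZMod (n i)) i)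
  map_zero' := by simp
  map_add' x y := by
    rw [← Finset.sum_add_distrib]
    refine Finset.sum_congr rfl fun i _ => ?_
    simp [AddMonoidHom.add_comp]

lemma pipair_apply (x y : (i : ι) → ZMod (n i)) :
    pipair n hn x y = ∑ i, zpair (n i) (hn i) (x i) (y i) := by
  simp [pipair, AddMonoidHom.finset_sum_apply]

lemma pipair_symm (x y : (i : ι) → ZMod (n i)) : pipair n hn x y = pipair n hn y x := by
  rw [pipair_apply, pipair_apply]
  exact Finset.sum_congr rfl fun i _ => zpair_symm _ _ _ _

lemma pipair_nondeg (x : (i : ι) → ZMod (n i)) (h : ∀ y, pipair n hn x y = 0) : x = 0 := by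
  classical
  funext i
  refine zpair_nondeg _ (hn i) _ fun b => ?_
  have hx := h (Pi.single i b)
  rw [pipair_apply, Finset.sum_eq_single i] at hx
  · simpa using hx
  · intro j _ hj; simp [Pi.single_eq_of_ne hj]
  · intro hi; exact absurd (Finset.mem_univ i) hi
end pi

section transport
variable {A B : Type*} [AddCommGroup A] [AddCommGroup B]

def pullback (e : A ≃+ B) (φ : B →+ B →+ QZ) : A →+ A →+ QZ where
  toFun a := (φ (e a)).comp e.toAddMonoidHom
  map_zero' := by ext x; simp
  map_add' a b := by ext x; simp

@[simp] lemma pullback_apply (e : A ≃+ B) (φ : B →+ B →+ QZ) (a b : A) :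
    pullback e φ a b = φ (e a) (e b) := rfl
end transport

/-- Every finite abelian group has a symmetric nondegenerate pairing into `ℚ/ℤ`. -/
lemma exists_symm_nondeg (H : Type*) [AddCommGroup H] [Finite H] :
    ∃ φ : H →+ H →+ QZ, (∀ a b, φ a b = φ b a) ∧ (∀ a, (∀ b, φ a b = 0) → a = 0) := by
  obtain ⟨ι, hι, n, h1, ⟨e⟩⟩ := AddCommGroup.equiv_directSum_zmod_of_finite' H
  have hn : ∀ i, 0 < n i := fun i => Nat.lt_of_lt_of_le Nat.zero_lt_one (h1 i).le
  let e2 : (⨁ i : ι, ZMod (n i)) ≃+ ((i : ι) → ZMod (n i)) :=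
    AddEquiv.mk' DFinsupp.equivFunOnFintype (fun _ _ => rfl)
  let e3 := e.trans e2
  refine ⟨pullback e3 (pipair n hn), fun a b => ?_, fun a ha => ?_⟩
  · simp [pipair_symm]
  · have : e3 a = 0 := by
      refine pipair_nondeg n hn _ fun y => ?_
      simpa using ha (e3.symm y)
    simpa using congrArg e3.symm this

/-- An element of order `n` generates the `n`-torsion of `ℚ/ℤ`. -/
lemma torsion_gen {n : ℕ} (hn : 0 < n) {t0 : QZ} (ht0 : addOrderOf t0 = n)
    {t : QZ} (ht : n • t = 0) : ∃ b : ℤ, t = b • t0 := by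
  obtain ⟨m, hmn, hgcd, hm⟩ := (AddCircle.addOrderOf_eq_pos_iff hn).mp ht0
  induction t using QuotientAddGroup.induction_on with
  | H q =>
  rw [← AddCircle.coe_nsmul, AddCircle.coe_eq_zero_iff] at ht
  obtain ⟨k, hk⟩ := ht
  -- n • q = k • 1, i.e. q = k / n
  have hq : (n : ℚ) * q = k := by
    simp only [zsmul_eq_mul, mul_one, nsmul_eq_mul] at hk
    linarith [hk]
  -- Bezout
  have hbez : (1 : ℤ) = m * Nat.gcdA m n + n * Nat.gcdB m n := by
    have := Nat.gcd_eq_gcd_ab m n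
    rwa [hgcd] at this
  refine ⟨k * Nat.gcdA m n, ?_⟩
  set b : ℤ := k * Nat.gcdA m n
  set c : ℤ := k * Nat.gcdB m n
  have hqq : q = b • ((m : ℚ) / n * 1) + c • (1 : ℚ) := by
    have hn' : (n : ℚ) ≠ 0 := by positivity
    field_simp
    have hb : (b : ℚ) * m + c * n = k := by
      have : (b * m + c * n : ℤ) = k := by
        have : (k : ℤ) * (m * Nat.gcdA m n + n * Nat.gcdB m n) = k := by
          rw [← hbez]; ring
        calc (b * m + c * n : ℤ) = k * (m * Nat.gcdA m n + n * Nat.gcdB m n) := by ring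
          _ = k := this
      exact_mod_cast congrArg (fun z : ℤ => (z : ℚ)) this
    rw [zsmul_eq_mul, zsmul_eq_mul, mul_one]
    field_simp
    linarith [hq, hb]
  have h2 : ((b • ((m:ℚ)/n*1) + c • (1:ℚ) : ℚ) : QZ) = b • ((((m:ℚ)/n*1) : ℚ) : QZ) := by
    rw [AddCircle.coe_add, AddCircle.coe_zsmul, AddCircle.coe_zsmul, AddCircle.coe_period,
      smul_zero, add_zero]
  rw [← hm, hqq, h2]


lemma main_ind : ∀ (N : ℕ) (G : Type u) (_ : AddCommGroup G) (_ : Finite G),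
    Nat.card G ≤ N → ∀ β : G →+ G →+ QZ, (∀ g, β g g = 0) →
    (∀ g, (∀ h, β g h = 0) → g = 0) →
    ∃ (H : Type) (_ : AddCommGroup H) (_ : Finite H), Nonempty (G ≃+ H × H) := by
  intro N
  induction N with
  | zero =>
    intro G _ _ hle β halt hnd
    exact absurd (Nat.card_pos (α := G)) (by omega)
  | succ N ih =>
    intro G instG instF hle β halt hnd
    by_cases hss : Subsingleton G
    · refine ⟨PUnit, inferInstance, inferInstance, ⟨?_⟩⟩
      exact { toFun := fun _ => 0, invFun := fun _ => 0,
              left_inv := fun x => Subsingleton.elim _ _,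
              right_inv := fun x => Subsingleton.elim _ _,
              map_add' := fun _ _ => Subsingleton.elim _ _ }
    haveI : Nontrivial G := not_subsingleton_iff_nontrivial.mp hss
    have hskew : ∀ x y : G, β x y = - β y x := by
      intro x y
      have h1 := halt (x + y)
      simp only [map_add, AddMonoidHom.add_apply, halt x, halt y, zero_add, add_zero] at h1
      rw [eq_neg_iff_add_eq_zero, add_comm]
      exact h1
    set n := AddMonoid.exponent G with hn_def
    have hn1 : 1 < n := AddMonoid.one_lt_exponent
    have hn : 0 < n := by omega
    haveI : NeZero n := ⟨by omega⟩
    have hEE : AddMonoid.ExponentExists G :=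
      AddMonoid.exponent_ne_zero.mp (AddMonoid.exponent_ne_zero_of_finite)
    obtain ⟨g, hgord⟩ := AddMonoid.exists_addOrderOf_eq_exponent hEE
    rw [← hn_def] at hgord
    have hnsmul : ∀ x : G, n • x = 0 := fun x => AddMonoid.exponent_nsmul_eq_zero x
    -- find h with addOrderOf (β g h) = n
    have hβgn : ∀ x : G, n • β g x = 0 := by
      intro x; rw [← map_nsmul, hnsmul, map_zero]
    obtain ⟨h, hβgh⟩ : ∃ h : G, addOrderOf (β g h) = n := by
      set R := (β g).range with hR
      haveI : Finite ↥R := Set.Finite.to_subtype (Set.finite_range _)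
      set m := AddMonoid.exponent ↥R with hm
      have hEER : AddMonoid.ExponentExists ↥R :=
        AddMonoid.exponent_ne_zero.mp (AddMonoid.exponent_ne_zero_of_finite)
      obtain ⟨t, htord⟩ := AddMonoid.exists_addOrderOf_eq_exponent hEER
      obtain ⟨h0, hh0⟩ := t.2
      have hmn : m ∣ n := by
        have htn : n • t = 0 := by
          apply Subtype.ext
          show ((n • t : ↥R) : QZ) = 0
          rw [AddSubgroup.coe_nsmul, ← hh0]
          exact hβgn h0
        have hd := addOrderOf_dvd_of_nsmul_eq_zero htn
        rwa [htord] at hd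
      have hnm : n ∣ m := by
        have hmsm : ∀ x : G, m • β g x = 0 := by
          intro x
          have := AddMonoid.exponent_nsmul_eq_zero (⟨β g x, ⟨x, rfl⟩⟩ : ↥R)
          exact_mod_cast congrArg (AddSubgroup.subtype R) this
        have : (m • g) = 0 := by
          apply hnd
          intro x
          have e1 : β (m • g) x = m • β g x := by rw [map_nsmul]; rfl
          rw [e1]
          exact hmsm x
        have hd := addOrderOf_dvd_of_nsmul_eq_zero this
        rwa [hgord] at hd
      have hmn_eq : m = n := Nat.dvd_antisymm hmn hnm
      refine ⟨h0, ?_⟩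
      rw [hh0, AddSubgroup.addOrderOf_coe, htord]
      exact hmn_eq
    set t0 : QZ := β g h with ht0_def
    have ht0 : addOrderOf t0 = n := hβgh
    have hhord : addOrderOf h = n := by
      have h1 : addOrderOf h ∣ n := by
        have := AddMonoid.addOrder_dvd_exponent h; exact this
      have h2 : n ∣ addOrderOf h := by
        have hz : addOrderOf h • t0 = 0 := by
          rw [ht0_def, ← map_nsmul, addOrderOf_nsmul_eq_zero, map_zero]
        have := addOrderOf_dvd_of_nsmul_eq_zero hz
        rwa [ht0] at this
      exact Nat.dvd_antisymm h1 h2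
    have hβhg : β h g = -t0 := hskew h g
    -- dvd from `• t0 = 0`
    have hdvd_t0 : ∀ b : ℤ, b • t0 = 0 → (n:ℤ) ∣ b := by
      intro b hb
      have := addOrderOf_dvd_iff_zsmul_eq_zero.mpr hb
      rwa [ht0] at this
    have hsmul_g : ∀ b : ℤ, (n:ℤ) ∣ b → b • g = 0 := by
      rintro b ⟨c, rfl⟩
      rw [mul_comm, mul_zsmul, natCast_zsmul, hnsmul, smul_zero]
    have hsmul_h : ∀ b : ℤ, (n:ℤ) ∣ b → b • h = 0 := by
      rintro b ⟨c, rfl⟩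
      rw [mul_comm, mul_zsmul, natCast_zsmul, hnsmul, smul_zero]
    -- the two submodules
    set p : Submodule ℤ G := Submodule.span ℤ ({g, h} : Set G) with hp_def
    set q : Submodule ℤ G :=
      { carrier := {x | β g x = 0 ∧ β h x = 0}
        add_mem' := by
          intro a b ⟨ha1, ha2⟩ ⟨hb1, hb2⟩
          constructor <;> simp [ha1, ha2, hb1, hb2]
        zero_mem' := by simp
        smul_mem' := by
          intro c x ⟨hx1, hx2⟩
          constructor <;> simp [hx1, hx2] } with hq_def
    have hq_mem : ∀ x : G, x ∈ q ↔ β g x = 0 ∧ β h x = 0 := fun x => Iff.rfl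
    have hp_mem : ∀ x : G, x ∈ p ↔ ∃ a b : ℤ, a • g + b • h = x := fun x =>
      Submodule.mem_span_pair
    -- computations of β on combinations
    have hβg_comb : ∀ a b : ℤ, β g (a • g + b • h) = b • t0 := by
      intro a b
      rw [map_add, map_zsmul, map_zsmul, halt g, smul_zero, zero_add, ht0_def]
    have hβh_comb : ∀ a b : ℤ, β h (a • g + b • h) = -(a • t0) := by
      intro a b
      rw [map_add, map_zsmul, map_zsmul, halt h, smul_zero, add_zero, hβhg,
        smul_neg]
    have hcompl : IsCompl p q := by
      constructor
      · rw [disjoint_iff]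
        apply le_antisymm _ bot_le
        rintro x ⟨hxp, hxq⟩
        obtain ⟨a, b, rfl⟩ := (hp_mem x).mp hxp
        obtain ⟨h1, h2⟩ := (hq_mem _).mp hxq
        rw [hβg_comb] at h1
        rw [hβh_comb, neg_eq_zero] at h2
        rw [Submodule.mem_bot]
        rw [hsmul_g a (hdvd_t0 a h2), hsmul_h b (hdvd_t0 b h1), add_zero]
      · rw [codisjoint_iff]
        apply le_antisymm le_top
        intro x _
        obtain ⟨b, hb⟩ := torsion_gen hn ht0 (t := β g x) (by
          rw [← map_nsmul, hnsmul, map_zero])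
        obtain ⟨a, ha⟩ := torsion_gen hn ht0 (t := β h x) (by
          rw [← map_nsmul, hnsmul, map_zero])
        apply Submodule.mem_sup.mpr
        refine ⟨(-a) • g + b • h, (hp_mem _).mpr ⟨-a, b, rfl⟩,
          x - ((-a) • g + b • h), ?_, by abel⟩
        rw [hq_mem]
        constructor
        · rw [map_sub, hβg_comb, hb, sub_self]
        · rw [map_sub, hβh_comb, ha, neg_smul, neg_neg, sub_self]
    -- the splitting
    set e1 := Submodule.prodEquivOfIsCompl p q hcompl with he1
    -- p is ZMod n × ZMod n
    set χg : ZMod n →+ G := ZMod.lift n ⟨zmultiplesHom G g, by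
      simp [zmultiplesHom_apply, natCast_zsmul, hnsmul g]⟩ with hχg
    set χh : ZMod n →+ G := ZMod.lift n ⟨zmultiplesHom G h, by
      simp [zmultiplesHom_apply, natCast_zsmul, hnsmul h]⟩ with hχh
    set ψ : ZMod n × ZMod n →+ G := χg.coprod χh with hψdef
    have hψ : ∀ j k : ℤ, ψ ((j : ZMod n), (k : ZMod n)) = j • g + k • h := by
      intro j k
      simp [hψdef, AddMonoidHom.coprod_apply, hχg, hχh, ZMod.lift_coe,
        zmultiplesHom_apply]
    have hψmem : ∀ w, ψ w ∈ p := by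
      rintro ⟨a, b⟩
      obtain ⟨j, rfl⟩ := ZMod.intCast_surjective a
      obtain ⟨k, rfl⟩ := ZMod.intCast_surjective b
      rw [hψ]
      exact (hp_mem _).mpr ⟨j, k, rfl⟩
    set ψ' : ZMod n × ZMod n →+ ↥p := AddMonoidHom.codRestrict ψ p hψmem with hψ'
    have hψ'_bij : Function.Bijective ψ' := by
      constructor
      · rw [injective_iff_map_eq_zero]
        rintro ⟨a, b⟩ hab
        obtain ⟨j, rfl⟩ := ZMod.intCast_surjective a
        obtain ⟨k, rfl⟩ := ZMod.intCast_surjective b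
        have h0 : ψ ((j : ZMod n), (k : ZMod n)) = 0 := by
          have := congrArg (Subtype.val) hab
          simpa [hψ'] using this
        rw [hψ] at h0
        have hk : k • t0 = 0 := by rw [← hβg_comb j k, h0, map_zero]
        have hj : -(j • t0) = 0 := by rw [← hβh_comb j k, h0, map_zero]
        rw [neg_eq_zero] at hj
        have hk' : ((k : ZMod n)) = 0 := by
          rw [ZMod.intCast_zmod_eq_zero_iff_dvd]; exact hdvd_t0 k hk
        have hj' : ((j : ZMod n)) = 0 := by
          rw [ZMod.intCast_zmod_eq_zero_iff_dvd]; exact hdvd_t0 j hj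
        rw [Prod.ext_iff]
        exact ⟨hj', hk'⟩
      · rintro ⟨z, hz⟩
        obtain ⟨a, b, hab⟩ := (hp_mem z).mp hz
        refine ⟨((a : ZMod n), (b : ZMod n)), ?_⟩
        apply Subtype.ext
        show ψ _ = z
        rw [hψ, hab]
    set e2 := AddEquiv.ofBijective ψ' hψ'_bij with he2
    -- the induced pairing on q
    set incl : ↥q →+ G := (q.subtype).toAddMonoidHom with hincl
    set βq : ↥q →+ ↥q →+ QZ :=
      { toFun := fun x => (β (x : G)).comp incl
        map_zero' := by ext y; simp
        map_add' := by intro x y; ext z; simp } with hβq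
    have hβq_apply : ∀ x y : ↥q, βq x y = β (x : G) (y : G) := fun x y => rfl
    have hβq_alt : ∀ x : ↥q, βq x x = 0 := fun x => halt _
    have hβq_nondeg : ∀ x : ↥q, (∀ y : ↥q, βq x y = 0) → x = 0 := by
      intro x hall
      apply Subtype.ext
      apply hnd
      intro z
      have hz : z ∈ p ⊔ q := by
        rw [codisjoint_iff.mp hcompl.2]; trivial
      obtain ⟨u, hu, v, hv, rfl⟩ := Submodule.mem_sup.mp hz
      obtain ⟨hxg, hxh⟩ := (hq_mem (x : G)).mp x.2
      have hxg' : β (x : G) g = 0 := by rw [hskew, hxg, neg_zero]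
      have hxh' : β (x : G) h = 0 := by rw [hskew, hxh, neg_zero]
      obtain ⟨a, b, rfl⟩ := (hp_mem u).mp hu
      rw [map_add, map_add, map_zsmul, map_zsmul, hxg', hxh', smul_zero,
        smul_zero, add_zero, zero_add]
      exact hall ⟨v, hv⟩
    -- cardinality drop
    have hg0 : g ≠ 0 := by
      intro hgz
      rw [hgz, addOrderOf_zero] at hgord
      omega
    have hgp : g ∈ p := Submodule.subset_span (by simp)
    haveI : Nontrivial ↥p :=
      ⟨⟨g, hgp⟩, 0, fun hEq => hg0 (by simpa [Subtype.ext_iff] using hEq)⟩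
    have hcardG : Nat.card G = Nat.card ↥p * Nat.card ↥q := by
      rw [← Nat.card_prod]
      exact (Nat.card_congr e1.toEquiv).symm
    have hplt : 1 < Nat.card ↥p := Finite.one_lt_card_iff_nontrivial.mpr inferInstance
    have hqpos : 0 < Nat.card ↥q := Nat.card_pos
    have hqlt : Nat.card ↥q < Nat.card G := by
      rw [hcardG]
      calc Nat.card ↥q = 1 * Nat.card ↥q := (one_mul _).symm
        _ < Nat.card ↥p * Nat.card ↥q := by
            exact (Nat.mul_lt_mul_right hqpos).mpr hplt
    have hqle : Nat.card ↥q ≤ N := by omega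
    obtain ⟨H', iH1, iH2, ⟨e3⟩⟩ := ih ↥q inferInstance inferInstance hqle βq
      hβq_alt hβq_nondeg
    refine ⟨ZMod n × H', inferInstance, ?_, ⟨?_⟩⟩
    · infer_instance
    · exact ((e1.toAddEquiv.symm).trans (AddEquiv.prodCongr e2.symm e3)).trans
        (AddEquiv.prodProdProdComm _ _ _ _)


noncomputable def sympl {H : Type*} [AddCommGroup H] (φ : H →+ H →+ QZ) :
    (H × H) →+ (H × H) →+ QZ where
  toFun p := (φ p.1).comp (AddMonoidHom.snd H H) - (φ.flip p.2).comp (AddMonoidHom.fst H H)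
  map_zero' := by ext x; simp
  map_add' p q := by
    ext x
    simp only [Prod.fst_add, Prod.snd_add, map_add, AddMonoidHom.add_comp,
      AddMonoidHom.sub_apply, AddMonoidHom.add_apply, AddMonoidHom.coe_comp,
      Function.comp_apply, AddMonoidHom.coe_fst, AddMonoidHom.coe_snd,
      AddMonoidHom.flip_apply]
    abel

lemma sympl_apply {H : Type*} [AddCommGroup H] (φ : H →+ H →+ QZ) (p q : H × H) :
    sympl φ p q = φ p.1 q.2 - φ q.1 p.2 := rfl

/-- A finite abelian group `G` admits a nondegenerate alternating `ℤ`-bilinear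
pairing `β : G × G → ℚ/ℤ` if and only if `G ≅ H × H` for some finite abelian
group `H`. -/
theorem stmt14 (G : Type*) [AddCommGroup G] [Finite G] :
    (∃ β : G →+ G →+ AddCircle (1 : ℚ),
      (∀ g : G, β g g = 0) ∧ (∀ g : G, (∀ h : G, β g h = 0) → g = 0)) ↔
    ∃ (H : Type) (_ : AddCommGroup H) (_ : Finite H), Nonempty (G ≃+ H × H) := by
  constructor
  · rintro ⟨β, halt, hnd⟩
    exact main_ind (Nat.card G) G ‹_› ‹_› le_rfl β halt hnd
  · rintro ⟨H, iH, iF, ⟨e⟩⟩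
    obtain ⟨φ, hsymm, hnd⟩ := exists_symm_nondeg H
    refine ⟨pullback e (sympl φ), fun a => ?_, fun a ha => ?_⟩
    · rw [pullback_apply, sympl_apply, sub_self]
    · have h0 : e a = 0 := by
        have hall : ∀ w : H × H, sympl φ (e a) w = 0 := by
          intro w
          simpa using ha (e.symm w)
        have hu : (e a).1 = 0 := by
          apply hnd
          intro d
          have := hall (0, d)
          rw [sympl_apply] at this
          simpa using this
        have hv : (e a).2 = 0 := by
          apply hnd
          intro c
          rw [hsymm]
          have := hall (c, 0)
          rw [sympl_apply] at this
          simpa using this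
        rw [Prod.ext_iff]
        exact ⟨hu, hv⟩
      simpa using congrArg e.symm h0
end
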